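/- arXiv:2005.02904 — 3 statements merged into one kernel-verified Lean document; each statement's English description precedes it below -/
import Mathlib

section
/- Let Γ be a finite group acting by automorphisms on a group H, let K be a Γ-invariant subgroup of H, and set H₀ = H^Γ, K₀ = K^Γ. Let w ∈ H₀. If the first nonabelian cohomology set H¹(Γ, K ∩ wKw⁻¹) (with Γ acting on K ∩ wKw⁻¹ by the restricted action) is trivial, then (KwK) ∩ H₀ = K₀ w K₀. -/
/-! Write a fixed element of `KwK` as `x = a * w * b`. Fixedness of `x` and `w` shows that
the coboundary `γ ↦ a⁻¹ * γ a` of `a` takes values in `K ∩ wKw⁻¹`; it is therefore the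
coboundary `γ ↦ k⁻¹ * γ k` of some `k ∈ K ∩ wKw⁻¹`, so `a * k⁻¹` is fixed and
`x = (a * k⁻¹) * w * (w⁻¹ * k * w * b)`, where the last factor is fixed because the others are. -/

section

variable {Γ H : Type*} [Group Γ] [Group H] (φ : Γ →* MulAut H)

theorem inv_mul_map_mul_apply (a : H) (γ δ : Γ) :
    a⁻¹ * φ (γ * δ) a = a⁻¹ * φ γ a * φ γ (a⁻¹ * φ δ a) := by
  simp only [map_mul, map_inv, MulAut.mul_apply]
  group

variable {φ}

theorem conj_inv_mul_map_eq {γ : Γ} {a w b : H} (hw : φ γ w = w)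
    (hx : φ γ (a * w * b) = a * w * b) :
    w⁻¹ * (a⁻¹ * φ γ a) * w = b * (φ γ b)⁻¹ := by
  rw [map_mul, map_mul, hw] at hx
  calc w⁻¹ * (a⁻¹ * φ γ a) * w
      = w⁻¹ * a⁻¹ * (φ γ a * w * φ γ b) * (φ γ b)⁻¹ := by group
    _ = b * (φ γ b)⁻¹ := by rw [hx]; group

theorem map_mul_inv_eq_of_inv_mul_map_eq {γ : Γ} {a k : H}
    (h : a⁻¹ * φ γ a = k⁻¹ * φ γ k) : φ γ (a * k⁻¹) = a * k⁻¹ := by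
  rw [map_mul, map_inv, ← mul_inv_cancel_left a (φ γ a), h]
  group

theorem map_eq_self_of_mul_eq {γ : Γ} {a b c : H} (h : a * b = c) (ha : φ γ a = a)
    (hc : φ γ c = c) : φ γ b = b := by
  rw [eq_inv_mul_of_mul_eq h, map_mul, map_inv, ha, hc]

end

theorem stmt1_general {Γ H : Type} [Group Γ] [Group H]
    (φ : Γ →* MulAut H) (K : Subgroup H)
    (hK : ∀ (γ : Γ), ∀ k ∈ K, φ γ k ∈ K)
    (w : H) (hw : ∀ γ : Γ, φ γ w = w)
    (hH1 : ∀ m : Γ → H,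
      (∀ γ, m γ ∈ K ∧ w⁻¹ * m γ * w ∈ K) →
      (∀ γ δ, m (γ * δ) = m γ * φ γ (m δ)) →
      ∃ k : H, (k ∈ K ∧ w⁻¹ * k * w ∈ K) ∧ ∀ γ, m γ = k⁻¹ * φ γ k) :
    ∀ x : H,
      ((∃ a ∈ K, ∃ b ∈ K, x = a * w * b) ∧ (∀ γ, φ γ x = x)) ↔
      (∃ a, (a ∈ K ∧ ∀ γ, φ γ a = a) ∧ ∃ b, (b ∈ K ∧ ∀ γ, φ γ b = b) ∧ x = a * w * b) := by
  intro x
  constructor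
  · rintro ⟨⟨a, ha, b, hb, rfl⟩, hx⟩
    have hmem (γ : Γ) : a⁻¹ * φ γ a ∈ K ∧ w⁻¹ * (a⁻¹ * φ γ a) * w ∈ K := by
      rw [conj_inv_mul_map_eq (hw γ) (hx γ)]
      exact ⟨K.mul_mem (K.inv_mem ha) (hK γ a ha), K.mul_mem hb (K.inv_mem (hK γ b hb))⟩
    obtain ⟨k, ⟨hk, hwk⟩, hcob⟩ := hH1 _ hmem (inv_mul_map_mul_apply φ a)
    have hfix (γ : Γ) : φ γ (a * k⁻¹ * w) = a * k⁻¹ * w := by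
      rw [map_mul, map_mul_inv_eq_of_inv_mul_map_eq (hcob γ), hw γ]
    have hx' : a * k⁻¹ * w * (w⁻¹ * k * w * b) = a * w * b := by group
    refine ⟨a * k⁻¹, ⟨K.mul_mem ha (K.inv_mem hk),
        fun γ => map_mul_inv_eq_of_inv_mul_map_eq (hcob γ)⟩,
      w⁻¹ * k * w * b, ⟨K.mul_mem hwk hb,
        fun γ => map_eq_self_of_mul_eq hx' (hfix γ) (hx γ)⟩, by group⟩
  · rintro ⟨a, ⟨ha, hfa⟩, b, ⟨hb, hfb⟩, rfl⟩
    exact ⟨⟨a, ha, b, hb, rfl⟩, fun γ => by rw [map_mul, map_mul, hw γ, hfa γ, hfb γ]⟩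

/-- Let a finite group Γ act by automorphisms on a group H (via
`φ : Γ →* MulAut H`), let K be a Γ-invariant subgroup, and w a Γ-fixed element.
If every cocycle of Γ valued in K ∩ wKw⁻¹ is a coboundary (triviality of the
nonabelian H¹), then (KwK) ∩ H^Γ = K^Γ w K^Γ. -/
theorem stmt1 {Γ H : Type} [Group Γ] [Finite Γ] [Group H]
    (φ : Γ →* MulAut H) (K : Subgroup H)
    (hK : ∀ (γ : Γ), ∀ k ∈ K, φ γ k ∈ K)
    (w : H) (hw : ∀ γ : Γ, φ γ w = w)
    (hH1 : ∀ m : Γ → H,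
      (∀ γ, m γ ∈ K ∧ w⁻¹ * m γ * w ∈ K) →
      (∀ γ δ, m (γ * δ) = m γ * φ γ (m δ)) →
      ∃ k : H, (k ∈ K ∧ w⁻¹ * k * w ∈ K) ∧ ∀ γ, m γ = k⁻¹ * φ γ k) :
    ∀ x : H,
      ((∃ a ∈ K, ∃ b ∈ K, x = a * w * b) ∧ (∀ γ, φ γ x = x)) ↔
      (∃ a, (a ∈ K ∧ ∀ γ, φ γ a = a) ∧ ∃ b, (b ∈ K ∧ ∀ γ, φ γ b = b) ∧ x = a * w * b) :=
  stmt1_general φ K hK w hw hH1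
end

section
/- Let G be a locally profinite group, J an open compact subgroup, (λ, W) a smooth finite-dimensional representation of J. Suppose (π, V) is a smooth irreducible representation of G such that Hom_J(λ, V) is one-dimensional, and let χ be the associated character of the Hecke algebra H_λ acting on Hom_J(λ, V). Then the space _χH̄_λ = {Ψ ∈ H̄_λ : φ ⋆ Ψ = χ(φ)Ψ for all φ ∈ H_λ} has dimension at most 1 over ℂ. -/
open Module

/-- The transpose `ᵗa ∈ End(W)` of `a ∈ End(W̃)`, `W` finite-dimensional. -/
noncomputable def transp {W : Type} [AddCommGroup W] [Module ℂ W] [FiniteDimensional ℂ W]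
    (a : Dual ℂ W →ₗ[ℂ] Dual ℂ W) : W →ₗ[ℂ] W :=
  (Module.evalEquiv ℂ W).symm.toLinearMap ∘ₗ a.dualMap ∘ₗ (Module.evalEquiv ℂ W).toLinearMap

/-- The space `Hom_J(λ, π)` of `J`-intertwiners `W → V`. -/
def intertwiners {G : Type} [Group G] {J : Subgroup G}
    {W : Type} [AddCommGroup W] [Module ℂ W] (lam : Representation ℂ J W)
    {V : Type} [AddCommGroup V] [Module ℂ V] (π : Representation ℂ G V) :
    Submodule ℂ (W →ₗ[ℂ] V) where
  carrier := {T | ∀ (j : J) (w : W), T (lam j w) = π (j : G) (T w)}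
  add_mem' := by intro a b ha hb j w; simp [ha j w, hb j w]
  zero_mem' := by intro j w; simp
  smul_mem' := by intro c T hT j w; simp [hT j w]

/-!
For `φ ∈ H_λ` and a `χ`-eigenvector `Ψ ∈ H̄_λ`, taking the trace of `(φ ⋆ Ψ)(1) = χ(φ) Ψ(1)`
gives `∑_{x ∈ J\G} tr (φ(x⁻¹) Ψ(x)) = χ(φ) tr Ψ(1)`. Choosing for `φ` the average of
`c ∈ End(W̃)` over `J h J` turns the left side into a positive integer multiple, independent
of `Ψ`, of `tr (c Ψ(h⁻¹))`. As `c` varies, nondegeneracy of the trace form shows that `Ψ(h⁻¹)`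
is determined by the single scalar `tr Ψ(1)`, so the eigenspace has dimension at most one.
-/

open DoubleCoset
open LinearMap (trace)

def rightCosetsIn {G : Type*} [Group G] (J : Subgroup G) (s : Set G) :
    Set (Quotient (QuotientGroup.rightRel J)) :=
  {q | q.out ∈ s}

section Topology

variable {G : Type*} [Group G] [TopologicalSpace G] [IsTopologicalGroup G] {J : Subgroup G}

lemma discreteTopology_quotient_rightRel (hJ : IsOpen (J : Set G)) :
    DiscreteTopology (Quotient (QuotientGroup.rightRel J)) := by
  refine discreteTopology_iff_isOpen_singleton.mpr fun q => ?_
  induction q using Quotient.inductionOn with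
  | h x =>
    rw [isOpen_coinduced]
    convert hJ.preimage (f := (x * ·⁻¹)) (by fun_prop) using 1
    ext y
    simp [Quotient.mk', Quotient.eq, QuotientGroup.rightRel_apply]

lemma IsCompact.finite_rightCosetsIn {K : Set G} (hK : IsCompact K) (hJ : IsOpen (J : Set G)) :
    (rightCosetsIn J K).Finite := by
  have := discreteTopology_quotient_rightRel hJ
  exact (hK.image continuous_quotient_mk').finite_of_discrete.subset
    fun q hq => ⟨q.out, hq, q.out_eq⟩

lemma isCompact_doubleCoset (hJ : IsCompact (J : Set G)) (h : G) :
    IsCompact (doubleCoset h (J : Set G) J) :=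
  (hJ.mul isCompact_singleton).mul hJ

end Topology

lemma mk_mem_rightCosetsIn_doubleCoset {G : Type*} [Group G] {J : Subgroup G} (x : G) :
    Quotient.mk _ x ∈ rightCosetsIn J (doubleCoset x (J : Set G) J) := by
  have hx : QuotientGroup.rightRel J x (Quotient.mk _ x).out :=
    Quotient.exact (Quotient.out_eq _).symm
  exact mem_doubleCoset.mpr ⟨_, QuotientGroup.rightRel_apply.mp hx, 1, J.one_mem, by group⟩

lemma inv_mem_doubleCoset_inv {G : Type*} [Group G] {J : Subgroup G} {h x : G}
    (hx : x ∈ doubleCoset h (J : Set G) J) : x⁻¹ ∈ doubleCoset h⁻¹ (J : Set G) J := by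
  obtain ⟨j₁, hj₁, j₂, hj₂, rfl⟩ := mem_doubleCoset.mp hx
  exact mem_doubleCoset.mpr ⟨j₂⁻¹, J.inv_mem hj₂, j₁⁻¹, J.inv_mem hj₁, by group⟩

lemma MonoidHom.finite_range_of_isOpen_ker {H M : Type*} [Group H] [TopologicalSpace H]
    [SeparatelyContinuousMul H] [CompactSpace H] [Monoid M] (f : H →* M)
    (hf : IsOpen (f.ker : Set H)) : (Set.range f).Finite := by
  have := Subgroup.quotient_finite_of_isOpen f.ker hf
  refine (Set.finite_range (QuotientGroup.lift f.ker f le_rfl)).subset ?_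
  rintro _ ⟨j, rfl⟩
  exact ⟨j, QuotientGroup.lift_mk (N := f.ker) le_rfl j⟩

section Smooth

variable {k : Type*} [Field k] {J : Type*} [Group J] {W : Type*} [AddCommGroup W] [Module k W]

lemma isOpen_ker_of_isOpen_fixed [TopologicalSpace J] [FiniteDimensional k W]
    (lam : Representation k J W) (hlam : ∀ w : W, IsOpen {j : J | lam j w = w}) :
    IsOpen (lam.ker : Set J) := by
  let b := Module.finBasis k W
  convert isOpen_iInter_of_finite fun i => hlam (b i) using 1
  ext j
  simpa using ⟨fun h i => by simp [h], fun h => b.ext h⟩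

lemma ker_le_ker_dual (lam : Representation k J W) : lam.ker ≤ lam.dual.ker := by
  intro j hj
  have hj' : lam j⁻¹ = 1 := inv_mem hj
  ext
  simp [hj', Module.Dual.transpose_apply]

lemma finite_range_dual_of_isOpen_fixed [TopologicalSpace J] [IsTopologicalGroup J]
    [CompactSpace J] [FiniteDimensional k W] (lam : Representation k J W)
    (hlam : ∀ w : W, IsOpen {j : J | lam j w = w}) : (Set.range lam.dual).Finite :=
  lam.dual.finite_range_of_isOpen_ker <|
    Subgroup.isOpen_mono (ker_le_ker_dual lam) (isOpen_ker_of_isOpen_fixed lam hlam)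

end Smooth

lemma finsum_mem_eq_ncard_smul {α M : Type*} [AddCommMonoid M] {s : Set α} (hs : s.Finite)
    {f : α → M} {a : M} (hf : ∀ x ∈ s, f x = a) : ∑ᶠ x ∈ s, f x = s.ncard • a := by
  rw [finsum_mem_congr rfl hf, finsum_mem_eq_finite_toFinset_sum _ hs, Finset.sum_const,
    Set.ncard_eq_toFinset_card s hs]

lemma LinearMap.eq_zero_of_forall_trace_comp_eq_zero {k E : Type*} [Field k] [AddCommGroup E]
    [Module k E] [FiniteDimensional k E] {M : Module.End k E}
    (h : ∀ c : Module.End k E, trace k E (c ∘ₗ M) = 0) : M = 0 := by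
  ext u
  refine (Module.forall_dual_apply_eq_zero_iff k (M u)).mp fun ξ => ?_
  have : ξ.smulRight u ∘ₗ M = (ξ ∘ₗ M).smulRight u := by ext; simp
  simpa [this, LinearMap.trace_smulRight] using h (ξ.smulRight u)

section BiEquivariant

variable {k : Type*} [Field k] {G : Type*} [Group G] {J : Subgroup G}
  {E : Type*} [AddCommGroup E] [Module k E] (ρ : Representation k J E)

def IsBiEquivariant (Ψ : G → Module.End k E) : Prop :=
  ∀ (j₁ j₂ : J) (g : G), Ψ (j₁ * g * j₂) = ρ j₁ ∘ₗ Ψ g ∘ₗ ρ j₂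

/-- `φ ⋆ Ψ = χ φ • Ψ` for every `φ ∈ H_λ`, the convolution being the sum over `J \ G`. -/
def IsHeckeEigenfunction (χ : (G → Module.End k E) → k) (Ψ : G → Module.End k E) : Prop :=
  ∀ φ : G → Module.End k E, IsBiEquivariant ρ φ →
    (Function.support fun q : Quotient (QuotientGroup.rightRel J) => φ q.out).Finite →
    ∀ g : G, ∑ᶠ q : Quotient (QuotientGroup.rightRel J), φ (g * q.out⁻¹) ∘ₗ Ψ q.out = χ φ • Ψ g

def twistedTranslates (h : G) (c : Module.End k E) (x : G) : Set (Module.End k E) :=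
  (fun p : J × J => ρ p.1 ∘ₗ c ∘ₗ ρ p.2) '' {p | (p.1 : G) * h * p.2 = x}

/-- Summing the *distinct* twisted translates (finitely many when `ρ` has finite image) is a
finite substitute for integrating `ρ j₁ ∘ c ∘ ρ j₂` over `J × J`. -/
noncomputable def doubleCosetAverage (h : G) (c : Module.End k E) (x : G) : Module.End k E :=
  ∑ᶠ e ∈ twistedTranslates ρ h c x, e

lemma trace_rep_inv_comp_comp_rep (j : J) (A : Module.End k E) :
    trace k E (ρ j⁻¹ ∘ₗ A ∘ₗ ρ j) = trace k E A := by
  rw [← Module.End.mul_eq_comp, ← Module.End.mul_eq_comp, LinearMap.trace_mul_comm, mul_assoc,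
    ← map_mul, mul_inv_cancel, map_one, mul_one]

variable {ρ}

lemma finite_twistedTranslates (hρ : (Set.range ρ).Finite) (h : G) (c : Module.End k E) (x : G) :
    (twistedTranslates ρ h c x).Finite := by
  refine (hρ.image2 (fun a b => a ∘ₗ c ∘ₗ b) hρ).subset ?_
  rintro _ ⟨p, -, rfl⟩
  exact ⟨_, ⟨p.1, rfl⟩, _, ⟨p.2, rfl⟩, rfl⟩

lemma self_mem_twistedTranslates (h : G) (c : Module.End k E) :
    c ∈ twistedTranslates ρ h c h :=
  ⟨(1, 1), by simp, by simp [Module.End.one_eq_id]⟩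

lemma twistedTranslates_eq_empty {h x : G} (hx : x ∉ doubleCoset h (J : Set G) J)
    (c : Module.End k E) : twistedTranslates ρ h c x = ∅ := by
  refine Set.image_eq_empty.mpr (Set.eq_empty_of_forall_notMem fun p hp => hx ?_)
  exact mem_doubleCoset.mpr ⟨p.1, p.1.2, p.2, p.2.2, hp.symm⟩

lemma twistedTranslates_mul_mul (h : G) (c : Module.End k E) (j₁ j₂ : J) (x : G) :
    twistedTranslates ρ h c (j₁ * x * j₂) =
      (fun e => ρ j₁ ∘ₗ e ∘ₗ ρ j₂) '' twistedTranslates ρ h c x := by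
  let T : J × J ≃ J × J := (Equiv.mulLeft j₁).prodCongr (Equiv.mulRight j₂)
  have hT : {p : J × J | (p.1 : G) * h * p.2 = j₁ * x * j₂} =
      T '' {p | (p.1 : G) * h * p.2 = x} := by
    rw [T.image_eq_preimage_symm]
    ext p
    simp only [Set.mem_preimage, Set.mem_ofPred, T, Equiv.prodCongr_symm, Equiv.prodCongr_apply,
      Prod.map, Equiv.mulLeft_symm, Equiv.mulRight_symm, Equiv.coe_mulLeft, Equiv.coe_mulRight,
      Subgroup.coe_mul, Subgroup.coe_inv]
    constructor <;> intro hp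
    · rw [show (j₁ : G)⁻¹ * p.1 * h * (p.2 * (j₂ : G)⁻¹) = (j₁ : G)⁻¹ * (p.1 * h * p.2) * (j₂ : G)⁻¹
        by group, hp]
      group
    · rw [← hp]; group
  rw [twistedTranslates, hT, Set.image_image, twistedTranslates, Set.image_image]
  refine Set.image_congr fun p _ => ?_
  simp only [T, Equiv.prodCongr_apply, Prod.map, Equiv.coe_mulLeft, Equiv.coe_mulRight, map_mul,
    ← Module.End.mul_eq_comp, mul_assoc]

lemma isBiEquivariant_doubleCosetAverage (hρ : (Set.range ρ).Finite) (h : G)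
    (c : Module.End k E) : IsBiEquivariant ρ (doubleCosetAverage ρ h c) := by
  intro j₁ j₂ x
  have hinj : Function.Injective fun e : Module.End k E => ρ j₁ ∘ₗ e ∘ₗ ρ j₂ := by
    intro a b hab
    ext v
    simpa using congr(ρ j₁⁻¹ ($hab (ρ j₂⁻¹ v)))
  let L : Module.End k E →+ Module.End k E :=
    (AddMonoidHom.mulLeft (ρ j₁)).comp (AddMonoidHom.mulRight (ρ j₂))
  rw [doubleCosetAverage, twistedTranslates_mul_mul, finsum_mem_image hinj.injOn,
    doubleCosetAverage]
  exact (L.map_finsum_mem _ (finite_twistedTranslates hρ h c x)).symm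

lemma doubleCosetAverage_eq_zero {h x : G} (hx : x ∉ doubleCoset h (J : Set G) J)
    (c : Module.End k E) : doubleCosetAverage ρ h c x = 0 := by
  rw [doubleCosetAverage, twistedTranslates_eq_empty hx, finsum_mem_empty]

lemma IsBiEquivariant.trace_comp_apply_mul_mul {Φ Ψ : G → Module.End k E}
    (hΦ : IsBiEquivariant ρ Φ) (hΨ : IsBiEquivariant ρ Ψ) (j₁ j₂ : J) (x : G) :
    trace k E (Φ (j₁ * x * j₂)⁻¹ ∘ₗ Ψ (j₁ * x * j₂)) = trace k E (Φ x⁻¹ ∘ₗ Ψ x) := by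
  have hinv : ((j₁ : G) * x * j₂)⁻¹ = (j₂⁻¹ : J) * x⁻¹ * (j₁⁻¹ : J) := by push_cast; group
  rw [hinv, hΦ, hΨ, ← trace_rep_inv_comp_comp_rep ρ j₂ (Φ x⁻¹ ∘ₗ Ψ x)]
  congr 1
  ext v
  simp

lemma IsBiEquivariant.trace_twistedTranslate_comp_apply {Ψ : G → Module.End k E}
    (hΨ : IsBiEquivariant ρ Ψ) {g : G} {p : J × J} (hp : (p.1 : G) * g⁻¹ * p.2 = g⁻¹)
    (c : Module.End k E) :
    trace k E ((ρ p.1 ∘ₗ c ∘ₗ ρ p.2) ∘ₗ Ψ g) = trace k E (c ∘ₗ Ψ g) := by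
  have hinv : (p.2 : G) * g * p.1 = g :=
    calc (p.2 : G) * g * p.1 = p.2 * (p.1 * g⁻¹ * p.2)⁻¹ * p.1 := by rw [hp]; group
      _ = g := by group
  conv_rhs => rw [← hinv, hΨ]
  simp only [← Module.End.mul_eq_comp]
  rw [mul_assoc, LinearMap.trace_mul_comm]
  simp only [mul_assoc]

lemma IsBiEquivariant.trace_doubleCosetAverage_comp_apply (hρ : (Set.range ρ).Finite)
    {Ψ : G → Module.End k E} (hΨ : IsBiEquivariant ρ Ψ) (g : G) (c : Module.End k E) :
    trace k E (doubleCosetAverage ρ g⁻¹ c g⁻¹ ∘ₗ Ψ g) =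
      (twistedTranslates ρ g⁻¹ c g⁻¹).ncard * trace k E (c ∘ₗ Ψ g) := by
  let L : Module.End k E →+ k := (trace k E).toAddMonoidHom.comp (AddMonoidHom.mulRight (Ψ g))
  have hfin := finite_twistedTranslates hρ g⁻¹ c g⁻¹
  rw [← nsmul_eq_mul, doubleCosetAverage]
  refine (L.map_finsum_mem _ hfin).trans (finsum_mem_eq_ncard_smul hfin ?_)
  rintro _ ⟨p, hp, rfl⟩
  exact hΨ.trace_twistedTranslate_comp_apply hp c

end BiEquivariant

section Eigenfunction

variable {k : Type*} [Field k] {G : Type*} [Group G] [TopologicalSpace G] [IsTopologicalGroup G]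
  {J : Subgroup G} {E : Type*} [AddCommGroup E] [Module k E] {ρ : Representation k J E}

lemma finite_support_doubleCosetAverage (hJopen : IsOpen (J : Set G))
    (hJcpt : IsCompact (J : Set G)) (h : G) (c : Module.End k E) :
    (Function.support fun q : Quotient (QuotientGroup.rightRel J) =>
      doubleCosetAverage ρ h c q.out).Finite := by
  refine ((isCompact_doubleCoset hJcpt h).finite_rightCosetsIn hJopen).subset fun q hq => ?_
  by_contra hq'
  exact hq (doubleCosetAverage_eq_zero hq' c)

/-- The trace of the eigen-equation at `1` for `φ = doubleCosetAverage ρ g⁻¹ c`: each right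
coset in `J g J` contributes the same term. -/
lemma IsHeckeEigenfunction.ncard_mul_trace_comp_apply (hJopen : IsOpen (J : Set G))
    (hJcpt : IsCompact (J : Set G)) (hρ : (Set.range ρ).Finite) {χ : (G → Module.End k E) → k}
    {Ψ : G → Module.End k E} (hΨ : IsBiEquivariant ρ Ψ) (hχ : IsHeckeEigenfunction ρ χ Ψ)
    (g : G) (c : Module.End k E) :
    ((rightCosetsIn J (doubleCoset g (J : Set G) J)).ncard *
        (twistedTranslates ρ g⁻¹ c g⁻¹).ncard : k) * trace k E (c ∘ₗ Ψ g) =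
      χ (doubleCosetAverage ρ g⁻¹ c) * trace k E (Ψ 1) := by
  set φ := doubleCosetAverage ρ g⁻¹ c
  set S := rightCosetsIn J (doubleCoset g (J : Set G) J)
  have hS : S.Finite := (isCompact_doubleCoset hJcpt g).finite_rightCosetsIn hJopen
  have hφ : IsBiEquivariant ρ φ := isBiEquivariant_doubleCosetAverage hρ g⁻¹ c
  have hsupp : (Function.support fun q : Quotient (QuotientGroup.rightRel J) =>
      φ (1 * q.out⁻¹) ∘ₗ Ψ q.out) ⊆ hS.toFinset := by
    intro q hq
    by_contra hqS
    have hφq : φ q.out⁻¹ = 0 := doubleCosetAverage_eq_zero (fun hmem =>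
      hqS (hS.mem_toFinset.mpr (by simpa using inv_mem_doubleCoset_inv hmem : q.out ∈ _))) c
    exact hq (by simp only [one_mul, hφq, LinearMap.zero_comp])
  have hterm : ∀ q ∈ hS.toFinset, trace k E (φ (1 * q.out⁻¹) ∘ₗ Ψ q.out) =
      (twistedTranslates ρ g⁻¹ c g⁻¹).ncard * trace k E (c ∘ₗ Ψ g) := by
    intro q hq
    obtain ⟨j₁, hj₁, j₂, hj₂, hq⟩ := mem_doubleCoset.mp (hS.mem_toFinset.mp hq)
    rw [one_mul, hq, hφ.trace_comp_apply_mul_mul hΨ ⟨j₁, hj₁⟩ ⟨j₂, hj₂⟩,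
      hΨ.trace_doubleCosetAverage_comp_apply hρ]
  have heig := congr(trace k E $(hχ φ hφ (finite_support_doubleCosetAverage hJopen hJcpt _ c) 1))
  rw [finsum_eq_sum_of_support_subset _ hsupp, map_sum, Finset.sum_congr rfl hterm,
    Finset.sum_const, map_smul, smul_eq_mul, nsmul_eq_mul] at heig
  rw [← heig, Set.ncard_eq_toFinset_card S hS]
  ring

lemma IsHeckeEigenfunction.smul_eq_smul [CharZero k] [FiniteDimensional k E]
    (hJopen : IsOpen (J : Set G)) (hJcpt : IsCompact (J : Set G)) (hρ : (Set.range ρ).Finite)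
    {χ : (G → Module.End k E) → k} {Ψ₁ Ψ₂ : G → Module.End k E}
    (hΨ₁ : IsBiEquivariant ρ Ψ₁) (hΨ₂ : IsBiEquivariant ρ Ψ₂)
    (hχ₁ : IsHeckeEigenfunction ρ χ Ψ₁) (hχ₂ : IsHeckeEigenfunction ρ χ Ψ₂) {a b : k}
    (hab : a * trace k E (Ψ₁ 1) = b * trace k E (Ψ₂ 1)) (g : G) :
    a • Ψ₁ g = b • Ψ₂ g := by
  rw [← sub_eq_zero]
  refine LinearMap.eq_zero_of_forall_trace_comp_eq_zero fun c => ?_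
  have key₁ := hχ₁.ncard_mul_trace_comp_apply hJopen hJcpt hρ hΨ₁ g c
  have key₂ := hχ₂.ncard_mul_trace_comp_apply hJopen hJcpt hρ hΨ₂ g c
  have hK : ((rightCosetsIn J (doubleCoset g (J : Set G) J)).ncard *
      (twistedTranslates ρ g⁻¹ c g⁻¹).ncard : k) ≠ 0 := by
    have h₁ := Set.ncard_ne_zero_of_mem (mk_mem_rightCosetsIn_doubleCoset g)
      ((isCompact_doubleCoset hJcpt g).finite_rightCosetsIn hJopen)
    have h₂ := Set.ncard_ne_zero_of_mem (self_mem_twistedTranslates g⁻¹ c)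
      (finite_twistedTranslates hρ _ _ _)
    exact_mod_cast mul_ne_zero h₁ h₂
  refine (mul_eq_zero.mp ?_).resolve_left hK
  rw [LinearMap.comp_sub, LinearMap.comp_smul, LinearMap.comp_smul, map_sub, map_smul, map_smul,
    smul_eq_mul, smul_eq_mul]
  linear_combination a * key₁ - b * key₂ + χ (doubleCosetAverage ρ g⁻¹ c) * hab

end Eigenfunction

lemma exists_ne_zero_mul_eq_mul {K : Type*} [CommMonoidWithZero K] [Nontrivial K] (s t : K) :
    ∃ a b : K, (a ≠ 0 ∨ b ≠ 0) ∧ a * s = b * t := by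
  by_cases hs : s = 0
  · exact ⟨1, 0, Or.inl one_ne_zero, by simp [hs]⟩
  · exact ⟨t, s, Or.inr hs, mul_comm t s⟩

theorem stmt10_general {G : Type} [Group G] [TopologicalSpace G] [IsTopologicalGroup G]
    (J : Subgroup G) (hJopen : IsOpen (J : Set G)) (hJcpt : IsCompact (J : Set G))
    {W : Type} [AddCommGroup W] [Module ℂ W] [FiniteDimensional ℂ W]
    (lam : Representation ℂ J W)
    (hlamsmooth : ∀ w : W, IsOpen {j : J | lam j w = w})
    (χ : (G → (Dual ℂ W →ₗ[ℂ] Dual ℂ W)) → ℂ) :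
    ∀ Ψ₁ Ψ₂ : G → (Dual ℂ W →ₗ[ℂ] Dual ℂ W),
      (∀ (j₁ j₂ : J) (g : G),
        Ψ₁ ((j₁ : G) * g * (j₂ : G)) = lam.dual j₁ ∘ₗ Ψ₁ g ∘ₗ lam.dual j₂) →
      (∀ (j₁ j₂ : J) (g : G),
        Ψ₂ ((j₁ : G) * g * (j₂ : G)) = lam.dual j₁ ∘ₗ Ψ₂ g ∘ₗ lam.dual j₂) →
      (∀ φ : G → (Dual ℂ W →ₗ[ℂ] Dual ℂ W),
        (∀ (j₁ j₂ : J) (g : G),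
          φ ((j₁ : G) * g * (j₂ : G)) = lam.dual j₁ ∘ₗ φ g ∘ₗ lam.dual j₂) →
        (Function.support
          (fun q : Quotient (QuotientGroup.rightRel J) => φ (Quotient.out q))).Finite →
        ∀ g : G,
          (∑ᶠ q : Quotient (QuotientGroup.rightRel J),
            φ (g * (Quotient.out q)⁻¹) ∘ₗ Ψ₁ (Quotient.out q)) = χ φ • Ψ₁ g) →
      (∀ φ : G → (Dual ℂ W →ₗ[ℂ] Dual ℂ W),
        (∀ (j₁ j₂ : J) (g : G),
          φ ((j₁ : G) * g * (j₂ : G)) = lam.dual j₁ ∘ₗ φ g ∘ₗ lam.dual j₂) →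
        (Function.support
          (fun q : Quotient (QuotientGroup.rightRel J) => φ (Quotient.out q))).Finite →
        ∀ g : G,
          (∑ᶠ q : Quotient (QuotientGroup.rightRel J),
            φ (g * (Quotient.out q)⁻¹) ∘ₗ Ψ₂ (Quotient.out q)) = χ φ • Ψ₂ g) →
      ∃ a b : ℂ, (a ≠ 0 ∨ b ≠ 0) ∧ ∀ g : G, a • Ψ₁ g = b • Ψ₂ g := by
  intro Ψ₁ Ψ₂ hΨ₁ hΨ₂ hχ₁ hχ₂
  have : CompactSpace J := isCompact_iff_compactSpace.mp hJcpt
  have hρ := finite_range_dual_of_isOpen_fixed lam hlamsmooth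
  obtain ⟨a, b, hab, htr⟩ :=
    exists_ne_zero_mul_eq_mul (trace ℂ _ (Ψ₁ 1)) (trace ℂ _ (Ψ₂ 1))
  exact ⟨a, b, hab, IsHeckeEigenfunction.smul_eq_smul hJopen hJcpt hρ hΨ₁ hΨ₂ hχ₁ hχ₂ htr⟩

/-- For `G` locally profinite, `J` a compact open subgroup, `λ` a smooth
finite-dimensional representation of `J`, and `(π, V)` a smooth irreducible
representation of `G` with `dim Hom_J(λ, V) = 1`, with associated Hecke character
`χ`, the eigenspace `_χH̄_λ = {Ψ ∈ H̄_λ : φ ⋆ Ψ = χ(φ)Ψ for all φ ∈ H_λ}` has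
dimension at most one: any two of its elements are proportional. -/
theorem stmt10 {G : Type} [Group G] [TopologicalSpace G] [IsTopologicalGroup G]
    (J : Subgroup G) (hJopen : IsOpen (J : Set G)) (hJcpt : IsCompact (J : Set G))
    {W : Type} [AddCommGroup W] [Module ℂ W] [FiniteDimensional ℂ W]
    (lam : Representation ℂ J W)
    (hlamsmooth : ∀ w : W, IsOpen {j : J | lam j w = w})
    {V : Type} [AddCommGroup V] [Module ℂ V] [Nontrivial V]
    (π : Representation ℂ G V)
    (hπsmooth : ∀ v : V, IsOpen {g : G | π g v = v})
    (hπirr : ∀ p : Submodule ℂ V, (∀ g : G, ∀ x ∈ p, π g x ∈ p) → p = ⊥ ∨ p = ⊤)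
    (hdim : Module.finrank ℂ (intertwiners lam π) = 1)
    (χ : (G → (Dual ℂ W →ₗ[ℂ] Dual ℂ W)) → ℂ)
    -- χ is the character through which the spherical Hecke algebra H_λ acts on
    -- the one-dimensional space Hom_J(λ, V):
    (hχ : ∀ φ : G → (Dual ℂ W →ₗ[ℂ] Dual ℂ W),
      (∀ (j₁ j₂ : J) (g : G),
        φ ((j₁ : G) * g * (j₂ : G)) = lam.dual j₁ ∘ₗ φ g ∘ₗ lam.dual j₂) →
      (Function.support (fun q : G ⧸ J => φ (Quotient.out q))).Finite →
      ∀ T ∈ intertwiners lam π, ∀ w : W,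
        (∑ᶠ q : G ⧸ J,
          π (Quotient.out q) (T (transp (φ ((Quotient.out q)⁻¹)) w))) = χ φ • T w) :
    ∀ Ψ₁ Ψ₂ : G → (Dual ℂ W →ₗ[ℂ] Dual ℂ W),
      (∀ (j₁ j₂ : J) (g : G),
        Ψ₁ ((j₁ : G) * g * (j₂ : G)) = lam.dual j₁ ∘ₗ Ψ₁ g ∘ₗ lam.dual j₂) →
      (∀ (j₁ j₂ : J) (g : G),
        Ψ₂ ((j₁ : G) * g * (j₂ : G)) = lam.dual j₁ ∘ₗ Ψ₂ g ∘ₗ lam.dual j₂) →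
      (∀ φ : G → (Dual ℂ W →ₗ[ℂ] Dual ℂ W),
        (∀ (j₁ j₂ : J) (g : G),
          φ ((j₁ : G) * g * (j₂ : G)) = lam.dual j₁ ∘ₗ φ g ∘ₗ lam.dual j₂) →
        (Function.support
          (fun q : Quotient (QuotientGroup.rightRel J) => φ (Quotient.out q))).Finite →
        ∀ g : G,
          (∑ᶠ q : Quotient (QuotientGroup.rightRel J),
            φ (g * (Quotient.out q)⁻¹) ∘ₗ Ψ₁ (Quotient.out q)) = χ φ • Ψ₁ g) →
      (∀ φ : G → (Dual ℂ W →ₗ[ℂ] Dual ℂ W),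
        (∀ (j₁ j₂ : J) (g : G),
          φ ((j₁ : G) * g * (j₂ : G)) = lam.dual j₁ ∘ₗ φ g ∘ₗ lam.dual j₂) →
        (Function.support
          (fun q : Quotient (QuotientGroup.rightRel J) => φ (Quotient.out q))).Finite →
        ∀ g : G,
          (∑ᶠ q : Quotient (QuotientGroup.rightRel J),
            φ (g * (Quotient.out q)⁻¹) ∘ₗ Ψ₂ (Quotient.out q)) = χ φ • Ψ₂ g) →
      ∃ a b : ℂ, (a ≠ 0 ∨ b ≠ 0) ∧ ∀ g : G, a • Ψ₁ g = b • Ψ₂ g :=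
  stmt10_general J hJopen hJcpt lam hlamsmooth χ
end

section
/- Let G be a group, J ≤ G, and (λ, W) a representation of J. Let Ψ : G → End(W̃) satisfy Ψ(j₁gj₂) = λ̃(j₁)Ψ(g)λ̃(j₂). Fix w ∈ W and define f_w ∈ ind_J^G λ as the function supported on J with f_w(j) = λ(j)w. Then for any Λ : G → W̃ with Λ(jg) = λ̃(j)Λ(g), the pairing Σ_{x ∈ J\G} ⟨f_w(xg), Λ(x)⟩ equals ⟨w, Λ(g⁻¹)⟩ for all g ∈ G; in particular, if Λ = Λ_{Ψ,w̃} (i.e., Λ(x) = Ψ(x)(w̃)), the matrix-coefficient function g ↦ Σ_{x∈J\G}⟨f_w(xg), Λ(x)⟩ equals g ↦ ⟨w, Ψ(g⁻¹)(w̃)⟩. -/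
/-! Since `f_w` is supported on `J`, only the coset `J g⁻¹` contributes to the sum; writing its
representative as `j g⁻¹` with `j ∈ J`, the factor `λ̃(j)` coming from the equivariance of `Λ`
cancels against `f_w(j) = λ(j) w`. The statement for `Ψ` is the case `Λ(x) = Ψ(x)(w̃)`. -/

open Module

theorem Representation.dual_apply_apply_self {k H V : Type*} [CommRing k] [Group H]
    [AddCommGroup V] [Module k V] (ρ : Representation k H V) (h : H) (f : Dual k V)
    (v : V) : ρ.dual h f (ρ h v) = f v := by
  rw [Representation.dual_apply, Dual.transpose_apply, LinearMap.comp_apply,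
    ← Module.End.mul_apply, ← map_mul, inv_mul_cancel, map_one, Module.End.one_apply]

namespace QuotientGroup

variable {G : Type*} [Group G] (J : Subgroup G)

theorem out_mul_mem_iff (q : Quotient (rightRel J)) (g : G) :
    q.out * g ∈ J ↔ q = Quotient.mk _ g⁻¹ := by
  conv_rhs => rw [← q.out_eq, Quotient.eq, rightRel_apply, ← J.inv_mem_iff]
  simp

theorem finsum_rightRel_eq_of_mul_mem {M : Type*} [AddCommMonoid M] (F : G → M) (g : G)
    (hF : ∀ x, x * g ∉ J → F x = 0) :
    ∑ᶠ q : Quotient (rightRel J), F q.out = F (Quotient.mk (rightRel J) g⁻¹).out :=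
  finsum_eq_single _ _ fun q hq => hF _ fun hmem => hq ((out_mul_mem_iff J q g).mp hmem)

end QuotientGroup

theorem finsum_out_pairing_eq_of_dual_equivariant {G k W : Type*} [Group G] (J : Subgroup G)
    [DecidablePred (· ∈ J)] [CommRing k] [AddCommGroup W] [Module k W]
    (lam : Representation k J W) (w : W) (Λ : G → Dual k W)
    (hΛ : ∀ (j : J) (g : G), Λ ((j : G) * g) = lam.dual j (Λ g)) (g : G) :
    ∑ᶠ q : Quotient (QuotientGroup.rightRel J),
      Λ q.out (if h : q.out * g ∈ J then lam ⟨_, h⟩ w else 0) = Λ g⁻¹ w := by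
  rw [QuotientGroup.finsum_rightRel_eq_of_mul_mem J
    (fun x => Λ x (if h : x * g ∈ J then lam ⟨_, h⟩ w else 0)) g fun x hx => by simp [hx]]
  set x := Quotient.out (Quotient.mk (QuotientGroup.rightRel J) g⁻¹)
  have hmem : x * g ∈ J := (QuotientGroup.out_mul_mem_iff J _ g).mpr rfl
  have hx : x = ((⟨x * g, hmem⟩ : J) : G) * g⁻¹ := by simp
  simp only [dif_pos hmem]
  conv_lhs => enter [1]; rw [hx, hΛ]
  exact lam.dual_apply_apply_self _ _ w

theorem stmt19_general {G : Type} [Group G] (J : Subgroup G) [DecidablePred (· ∈ J)]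
    {W : Type} [AddCommGroup W] [Module ℂ W]
    (lam : Representation ℂ J W) (w : W)
    (fw : G → W)
    (hfw : fw = fun g => if h : g ∈ J then lam ⟨g, h⟩ w else 0) :
    (∀ Λ : G → Dual ℂ W,
      (∀ (j : J) (g : G), Λ ((j : G) * g) = lam.dual j (Λ g)) →
      ∀ g : G,
        (∑ᶠ q : Quotient (QuotientGroup.rightRel J),
          Λ (Quotient.out q) (fw (Quotient.out q * g))) = Λ g⁻¹ w) ∧
    (∀ Ψ : G → (Dual ℂ W →ₗ[ℂ] Dual ℂ W),
      (∀ (j₁ j₂ : J) (g : G),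
        Ψ ((j₁ : G) * g * (j₂ : G)) = lam.dual j₁ ∘ₗ Ψ g ∘ₗ lam.dual j₂) →
      ∀ (wd : Dual ℂ W) (g : G),
        (∑ᶠ q : Quotient (QuotientGroup.rightRel J),
          (Ψ (Quotient.out q) wd) (fw (Quotient.out q * g))) = (Ψ g⁻¹ wd) w) := by
  subst hfw
  have pairing := finsum_out_pairing_eq_of_dual_equivariant J lam w
  refine ⟨pairing, fun Ψ hΨ wd g => pairing (Ψ · wd) (fun j x => ?_) g⟩
  have hΨ_left := hΨ j 1 x
  rw [map_one, Module.End.one_eq_id, LinearMap.comp_id, OneMemClass.coe_one, mul_one] at hΨ_left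
  exact LinearMap.congr_fun hΨ_left wd

/-- With `f_w ∈ ind_J^G λ` the function supported on `J` with
`f_w(j) = λ(j)w`, and `Λ : G → W̃` left `J`-equivariant, the pairing
`Σ_{x ∈ J\G} ⟨f_w(xg), Λ(x)⟩` equals `⟨w, Λ(g⁻¹)⟩`; in particular for
`Λ = Λ_{Ψ,wd}` with `Ψ ∈ H̄_λ`, the matrix coefficient equals
`g ↦ ⟨w, Ψ(g⁻¹)(wd)⟩`. -/
theorem stmt19 {G : Type} [Group G] (J : Subgroup G) [DecidablePred (· ∈ J)]
    {W : Type} [AddCommGroup W] [Module ℂ W] [FiniteDimensional ℂ W]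
    (lam : Representation ℂ J W) (w : W)
    (fw : G → W)
    (hfw : fw = fun g => if h : g ∈ J then lam ⟨g, h⟩ w else 0) :
    (∀ Λ : G → Dual ℂ W,
      (∀ (j : J) (g : G), Λ ((j : G) * g) = lam.dual j (Λ g)) →
      ∀ g : G,
        (∑ᶠ q : Quotient (QuotientGroup.rightRel J),
          Λ (Quotient.out q) (fw (Quotient.out q * g))) = Λ g⁻¹ w) ∧
    (∀ Ψ : G → (Dual ℂ W →ₗ[ℂ] Dual ℂ W),
      (∀ (j₁ j₂ : J) (g : G),
        Ψ ((j₁ : G) * g * (j₂ : G)) = lam.dual j₁ ∘ₗ Ψ g ∘ₗ lam.dual j₂) →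
      ∀ (wd : Dual ℂ W) (g : G),
        (∑ᶠ q : Quotient (QuotientGroup.rightRel J),
          (Ψ (Quotient.out q) wd) (fw (Quotient.out q * g))) = (Ψ g⁻¹ wd) w) :=
  stmt19_general J lam w fw hfw
end
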